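/- If σ' is a taxi polygon, then σ' does not occur as a factor (a string of consecutive letters) of the turn-word σ of any taxi walk starting at the origin. -/

import Mathlib

open Filter

/-- The oriented step relation of the Manhattan lattice. -/
def taxiStep (u v : ℤ × ℤ) : Prop :=
  (Even u.2 ∧ v = (u.1 + 1, u.2)) ∨
  (Odd u.2 ∧ v = (u.1 - 1, u.2)) ∨
  (Even u.1 ∧ v = (u.1, u.2 + 1)) ∨
  (Odd u.1 ∧ v = (u.1, u.2 - 1))

/-- Perpendicularity of two step vectors. -/
def perp (d e : ℤ × ℤ) : Prop := d.1 * e.1 + d.2 * e.2 = 0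

instance (d e : ℤ × ℤ) : Decidable (perp d e) := by unfold perp; infer_instance

/-- The walk `l` turns at its `i`-th vertex (meaningful for `1 ≤ i ≤ l.length - 2`). -/
def turnAt (l : List (ℤ × ℤ)) (i : ℕ) : Prop :=
  perp (l.getD i 0 - l.getD (i - 1) 0) (l.getD (i + 1) 0 - l.getD i 0)

instance (l : List (ℤ × ℤ)) (i : ℕ) : Decidable (turnAt l i) := by
  unfold turnAt; infer_instance

/-- A taxi walk, recorded as its list of vertices (a walk of length `n` has `n + 1` vertices). -/
def IsTaxiWalk (l : List (ℤ × ℤ)) : Prop :=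
  l ≠ [] ∧ l.Nodup ∧
  (∀ i, i + 1 < l.length → taxiStep (l.getD i 0) (l.getD (i + 1) 0)) ∧
  (∀ i, 1 ≤ i → i + 2 < l.length → ¬(turnAt l i ∧ turnAt l (i + 1)))

/-- The set of taxi walks of length `n` starting at the origin. -/
def originWalks (n : ℕ) : Set (List (ℤ × ℤ)) :=
  {l | IsTaxiWalk l ∧ l.length = n + 1 ∧ l.getD 0 0 = 0}

/-- `taxiCount n` is `c_n`, the number of taxi walks of length `n` starting at the origin. -/
noncomputable def taxiCount (n : ℕ) : ℕ := (originWalks n).ncard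

/-- The turn-word of a walk: `true` (the letter `t`) where the walk turns,
`false` (the letter `s`) where it goes straight. -/
def turnWord (l : List (ℤ × ℤ)) : List Bool :=
  (List.range (l.length - 2)).map fun i => decide (turnAt l (i + 1))

/-- The encoding of a taxi walk starting at the origin: the first coordinate is `true`
(for `N`) if `v₁ = (0,1)` and `false` (for `E`) if `v₁ = (1,0)`; the second is the turn-word. -/
def encode (l : List (ℤ × ℤ)) : Bool × List Bool :=
  (decide (l.getD 1 0 = (0, 1)), turnWord l)

/-- A bridge: a taxi walk from `(0,0)` to `(1,0)` staying at abscissa `≥ 1` after the start,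
whose last step is horizontal and ends at maximal abscissa. -/
def IsBridge (l : List (ℤ × ℤ)) : Prop :=
  IsTaxiWalk l ∧ 2 ≤ l.length ∧ l.getD 0 0 = (0, 0) ∧ l.getD 1 0 = (1, 0) ∧
  (∀ i, 1 ≤ i → i < l.length → 1 ≤ (l.getD i 0).1) ∧
  (l.getD (l.length - 1) 0).2 = (l.getD (l.length - 2) 0).2 ∧
  (∀ i, i < l.length → (l.getD i 0).1 ≤ (l.getD (l.length - 1) 0).1)

/-- `bridgeCount n` is `b_n`, the number of bridges of length `n`, with `b_0 = 1`. -/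
noncomputable def bridgeCount : ℕ → ℕ
  | 0 => 1
  | n + 1 => {l : List (ℤ × ℤ) | IsBridge l ∧ l.length = n + 2}.ncard

/-- The normalizing symmetry `f_{(x,y)}` of the oriented Manhattan lattice. -/
def normMap (p : ℤ × ℤ) (q : ℤ × ℤ) : ℤ × ℤ :=
  if Even p.1 then
    (if Even p.2 then (q.1 - p.1, q.2 - p.2) else (-(q.1 - p.1), q.2 - p.2))
  else
    (if Even p.2 then (q.1 - p.1, -(q.2 - p.2)) else (-(q.1 - p.1), -(q.2 - p.2)))

/-- The vertex `v_i` is a cutvertex of the bridge `l`. -/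
def IsCutAt (l : List (ℤ × ℤ)) (i : ℕ) : Prop :=
  0 < i ∧ i + 1 < l.length ∧
  IsBridge (l.take (i + 1)) ∧
  l.getD (i + 1) 0 = l.getD i 0 + (1, 0) ∧
  IsBridge ((l.drop i).map (normMap (l.getD i 0)))

/-- An irreducible bridge: a bridge with no cutvertex. -/
def IsIrreducibleBridge (l : List (ℤ × ℤ)) : Prop :=
  IsBridge l ∧ ∀ i, ¬ IsCutAt l i

/-- `irrBridgeCount n` is `a_n`, the number of irreducible bridges of length `n`, with `a_0 = 0`. -/
noncomputable def irrBridgeCount : ℕ → ℕ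
  | 0 => 0
  | n + 1 => {l : List (ℤ × ℤ) | IsIrreducibleBridge l ∧ l.length = n + 2}.ncard

/-- `σ` is a taxi polygon of length `k`: a word in `{s,t}^{k-1}` (`true = t`, `false = s`)
such that, for some first step to `(0,1)` or `(1,0)`, the walk of length `k` starting at the
origin whose turn/straight behaviour is prescribed by `σ` follows the edge orientations of
the Manhattan lattice, ends at the origin, visits no vertex other than the origin twice, and
makes no two consecutive turns. -/
def IsTaxiPolygon (k : ℕ) (σ : List Bool) : Prop :=
  σ.length + 1 = k ∧
  ∃ l : List (ℤ × ℤ),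
    l.length = k + 1 ∧
    l.getD 0 0 = 0 ∧
    (l.getD 1 0 = (0, 1) ∨ l.getD 1 0 = (1, 0)) ∧
    (∀ i, i + 1 < l.length → taxiStep (l.getD i 0) (l.getD (i + 1) 0)) ∧
    l.getD k 0 = 0 ∧
    l.dropLast.Nodup ∧
    (∀ i, 1 ≤ i → i + 2 < l.length → ¬(turnAt l i ∧ turnAt l (i + 1))) ∧
    turnWord l = σ
/-!
Suppose the turn-word of the polygon `w` of length `k` occurs in that of `l` at position `j`.
A symmetry of the oriented lattice carries the edge `v_j v_{j+1}` of `l` onto the first edge of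
`w`. Since a taxi walk is determined by its first edge and by the positions of its turns, it
carries `v_j, …, v_{j+k}` onto `w`, which is closed; so `v_{j+k} = v_j`, and `l` is not
self-avoiding.
-/

open Function

theorem taxiStep_iff_emod {u v : ℤ × ℤ} : taxiStep u v ↔
    (v.2 = u.2 ∧ v.1 = u.1 + 1 - 2 * (u.2 % 2)) ∨
    (v.1 = u.1 ∧ v.2 = u.2 + 1 - 2 * (u.1 % 2)) := by
  simp only [taxiStep, Int.even_iff, Int.odd_iff, Prod.ext_iff]
  omega

theorem taxiStep_zero_iff {v : ℤ × ℤ} : taxiStep 0 v ↔ v = (0, 1) ∨ v = (1, 0) := by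
  simp only [taxiStep_iff_emod, Prod.ext_iff, Prod.fst_zero, Prod.snd_zero]
  omega

theorem taxiStep.sub_eq {u v : ℤ × ℤ} (h : taxiStep u v) :
    v - u = (1, 0) ∨ v - u = (-1, 0) ∨ v - u = (0, 1) ∨ v - u = (0, -1) := by
  rw [taxiStep_iff_emod] at h
  simp only [Prod.ext_iff, Prod.fst_sub, Prod.snd_sub]
  omega

theorem perp_sub_iff_of_taxiStep {u v w : ℤ × ℤ} (huv : taxiStep u v) (hvw : taxiStep v w) :
    perp (v - u) (w - v) ↔ ((v - u).2 = 0 ↔ (w - v).2 ≠ 0) := by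
  rcases huv.sub_eq with h | h | h | h <;> rcases hvw.sub_eq with h' | h' | h' | h' <;>
    simp [perp, h, h']

theorem eq_of_taxiStep_of_snd_sub_eq_zero_iff {v w w' : ℤ × ℤ} (hw : taxiStep v w)
    (hw' : taxiStep v w') (h : (w - v).2 = 0 ↔ (w' - v).2 = 0) : w = w' := by
  rw [taxiStep_iff_emod] at hw hw'
  simp only [Prod.snd_sub, sub_eq_zero] at h
  rw [Prod.ext_iff]
  omega

theorem taxiStep_right_unique {u v w w' : ℤ × ℤ} (huv : taxiStep u v) (hvw : taxiStep v w)
    (hvw' : taxiStep v w') (h : perp (v - u) (w - v) ↔ perp (v - u) (w' - v)) : w = w' := by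
  rw [perp_sub_iff_of_taxiStep huv hvw, perp_sub_iff_of_taxiStep huv hvw'] at h
  refine eq_of_taxiStep_of_snd_sub_eq_zero_iff hvw hvw' ?_
  tauto

theorem taxiWalk_ext {p q : ℕ → ℤ × ℤ} {k : ℕ} (h0 : p 0 = q 0) (h1 : p 1 = q 1)
    (hp : ∀ i < k, taxiStep (p i) (p (i + 1))) (hq : ∀ i < k, taxiStep (q i) (q (i + 1)))
    (hturn : ∀ i, i + 2 ≤ k →
      (perp (p (i + 1) - p i) (p (i + 2) - p (i + 1)) ↔
        perp (q (i + 1) - q i) (q (i + 2) - q (i + 1)))) :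
    ∀ i ≤ k, p i = q i := by
  have hpair : ∀ i, i + 1 ≤ k → p i = q i ∧ p (i + 1) = q (i + 1) := by
    intro i
    induction i with
    | zero => exact fun _ => ⟨h0, h1⟩
    | succ i ih =>
      intro hi
      obtain ⟨hpi, hpi1⟩ := ih (by omega)
      refine ⟨hpi1, taxiStep_right_unique (hq i (by omega)) ?_ (hq (i + 1) hi) ?_⟩
      · rw [← hpi1]
        exact hp (i + 1) hi
      · have := hturn i hi
        rwa [hpi, hpi1] at this
  intro i hi
  cases i with
  | zero => exact h0
  | succ i => exact (hpair i hi).2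

structure IsTaxiSymmetry (g : ℤ × ℤ → ℤ × ℤ) : Prop where
  injective : Injective g
  map_taxiStep : ∀ {u v}, taxiStep u v → taxiStep (g u) (g v)
  perp_sub_iff : ∀ u v w x, perp (g u - g v) (g w - g x) ↔ perp (u - v) (w - x)

theorem IsTaxiSymmetry.comp {f g : ℤ × ℤ → ℤ × ℤ} (hg : IsTaxiSymmetry g)
    (hf : IsTaxiSymmetry f) : IsTaxiSymmetry (g ∘ f) where
  injective := hg.injective.comp hf.injective
  map_taxiStep h := hg.map_taxiStep (hf.map_taxiStep h)
  perp_sub_iff u v w x := (hg.perp_sub_iff _ _ _ _).trans (hf.perp_sub_iff u v w x)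

theorem isTaxiSymmetry_swap : IsTaxiSymmetry Prod.swap where
  injective := Prod.swap_injective
  map_taxiStep h := by
    rw [taxiStep_iff_emod] at h ⊢
    simp only [Prod.fst_swap, Prod.snd_swap]
    omega
  perp_sub_iff u v w x := by
    simp only [perp, Prod.fst_sub, Prod.snd_sub, Prod.fst_swap, Prod.snd_swap]
    constructor <;> intro h <;> linarith

theorem isTaxiSymmetry_normMap (p : ℤ × ℤ) : IsTaxiSymmetry (normMap p) where
  injective a b h := by
    unfold normMap at h
    split_ifs at h <;> simp only [Prod.mk.injEq] at h <;> rw [Prod.ext_iff] <;> omega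
  map_taxiStep h := by
    rw [taxiStep_iff_emod] at h ⊢
    unfold normMap
    split_ifs with h1 h2 h2 <;> simp only [Int.even_iff] at h1 h2 <;> omega
  perp_sub_iff u v w x := by
    unfold normMap perp
    split_ifs <;> simp only [Prod.fst_sub, Prod.snd_sub] <;> constructor <;> intro h <;>
      linarith

theorem normMap_self (p : ℤ × ℤ) : normMap p p = 0 := by
  unfold normMap
  split_ifs <;> simp [Prod.ext_iff]

theorem exists_isTaxiSymmetry {u v t : ℤ × ℤ} (h : taxiStep u v)
    (ht : t = (0, 1) ∨ t = (1, 0)) :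
    ∃ g, IsTaxiSymmetry g ∧ g u = 0 ∧ g v = t := by
  have hv : normMap u v = (0, 1) ∨ normMap u v = (1, 0) := by
    rw [← taxiStep_zero_iff, ← normMap_self u]
    exact (isTaxiSymmetry_normMap u).map_taxiStep h
  by_cases hvt : normMap u v = t
  · exact ⟨normMap u, isTaxiSymmetry_normMap u, normMap_self u, hvt⟩
  · refine ⟨Prod.swap ∘ normMap u, isTaxiSymmetry_swap.comp (isTaxiSymmetry_normMap u),
      ?_, ?_⟩
    · simp [normMap_self]
    · rcases hv with hv | hv <;> rcases ht with rfl | rfl <;> simp_all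

theorem IsTaxiPolygon.two_le {k : ℕ} {σ : List Bool} (h : IsTaxiPolygon k σ) : 2 ≤ k := by
  obtain ⟨hk, l, -, -, hl1, -, hlk, -⟩ := h
  by_contra! hk2
  obtain rfl : k = 1 := by omega
  rcases hl1 with hl1 | hl1 <;> rw [hlk] at hl1 <;> simp [Prod.ext_iff] at hl1

theorem exists_turnAt_iff_of_turnWord_infix {w l : List (ℤ × ℤ)} (hw : 2 < w.length)
    (h : turnWord w <:+: turnWord l) :
    ∃ j, j + w.length ≤ l.length ∧
      ∀ i, i + 2 < w.length → (turnAt l (j + i + 1) ↔ turnAt w (i + 1)) := by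
  obtain ⟨j, hj, hget⟩ := List.infix_iff_getElem?.mp h
  simp only [turnWord, List.length_map, List.length_range] at hj hget
  refine ⟨j, by omega, fun i hi => ?_⟩
  have := hget i (by omega)
  rw [List.getElem?_map, List.getElem?_range (by omega)] at this
  simp only [Option.map_some, List.getElem_map, List.getElem_range, Option.some.injEq,
    decide_eq_decide] at this
  rwa [Nat.add_comm j i]

/-- If `σ'` is a taxi polygon, then `σ'` does not occur as a factor (a
string of consecutive letters) of the turn-word of any taxi walk starting at the origin. -/
theorem taxiPolygon_not_infix_of_turnWord (σ' : List Bool) (hσ' : ∃ k, IsTaxiPolygon k σ')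
    (n : ℕ) (l : List (ℤ × ℤ)) (hl : l ∈ originWalks n) :
    ¬ List.IsInfix σ' (turnWord l) := by
  intro hinf
  obtain ⟨k, hpoly⟩ := hσ'
  have hk := hpoly.two_le
  obtain ⟨-, w, hwlen, hw0, hw1, hwstep, hwk, -, -, rfl⟩ := hpoly
  obtain ⟨⟨-, hnodup, hlstep, -⟩, -, -⟩ := hl
  obtain ⟨j, hj, hturn⟩ := exists_turnAt_iff_of_turnWord_infix (by omega) hinf
  obtain ⟨g, hg, hgj, hgj1⟩ := exists_isTaxiSymmetry (hlstep j (by omega)) hw1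
  have hretrace := taxiWalk_ext (p := fun i => g (l.getD (j + i) 0)) (q := fun i => w.getD i 0)
    (k := k) (by simpa only [Nat.add_zero, hw0] using hgj) hgj1
    (fun i _ => hg.map_taxiStep (hlstep (j + i) (by omega)))
    (fun i _ => hwstep i (by omega))
    (fun i _ => by
      simp only [hg.perp_sub_iff]
      exact hturn i (by omega))
  have hclosed : l.getD (j + k) 0 = l.getD j 0 :=
    hg.injective (by rw [hretrace k le_rfl, hwk, hgj])
  rw [List.getD_eq_getElem _ _ (by omega), List.getD_eq_getElem _ _ (by omega),
    hnodup.getElem_inj_iff] at hclosed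
  omega
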